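/- arXiv:1704.08329 — 2 statements merged into one kernel-verified Lean document; each statement's English description precedes it below -/
import Mathlib

section
/- Let (W,S) be a Coxeter system and θ an involutive automorphism of (W,S). Then the set of twisted involutions 𝕀(θ) = {w ∈ W : θ(w) = w⁻¹} equals the orbit of the identity element under the right action of the free monoid on the alphabet {ŝ : s ∈ S}, where w·ŝ = ws if θ(s)ws = w and w·ŝ = θ(s)ws otherwise. -/
attribute [local instance] Classical.propDecidable
open CoxeterSystem List

variable {B : Type*} {M : CoxeterMatrix B} {W : Type*} [Group W]

/-- The right action of the symbol `ŝᵢ` on `w`: `w·ŝ = ws` if `θ(s)ws = w`, else `θ(s)ws`. -/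
noncomputable def twMul (cs : CoxeterSystem M W) (θ : W ≃* W) (w : W) (i : B) : W :=
  if θ (cs.simple i) * w * cs.simple i = w then w * cs.simple i
  else θ (cs.simple i) * w * cs.simple i

/-- The right action of a word in the symbols `ŝᵢ` on `w`. -/
noncomputable def twWord (cs : CoxeterSystem M W) (θ : W ≃* W) (w : W) (ω : List B) : W :=
  ω.foldl (twMul cs θ) w

/-- The set of twisted involutions `𝕀(θ) = {w : θ(w) = w⁻¹}`. -/
def TwistedInvolutions (θ : W ≃* W) : Set W := {w : W | θ w = w⁻¹}

/-- The rank of a twisted involution: the minimal length of an `Ŝ`-expression for it. -/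
noncomputable def twRank (cs : CoxeterSystem M W) (θ : W ≃* W) (w : W) : ℕ :=
  sInf {n | ∃ ω : List B, ω.length = n ∧ twWord cs θ 1 ω = w}

/-- `ω` is a reduced `Ŝ`-expression for `w`. -/
def IsReducedS (cs : CoxeterSystem M W) (θ : W ≃* W) (ω : List B) (w : W) : Prop :=
  twWord cs θ 1 ω = w ∧ ω.length = twRank cs θ w

/-- `w` is `(i,i')`-maximal: it has a reduced `Ŝ`-expression ending with the alternating
word `⋯ŝ'ŝ` of length `M i i'` (ending with `ŝᵢ`). -/
def IsMaximalS (cs : CoxeterSystem M W) (θ : W ≃* W) (w : W) (i i' : B) : Prop :=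
  ∃ ω : List B, IsReducedS cs θ (ω ++ alternatingWord i' i (M i i')) w

/-- The Bruhat order on `W`, via the subword property. -/
def BruhatLE (cs : CoxeterSystem M W) (u w : W) : Prop :=
  ∃ ω ω' : List B, cs.IsReduced ω ∧ cs.wordProd ω = w ∧ ω'.Sublist ω ∧ cs.wordProd ω' = u

/-!
A twisted involution `w ≠ 1` with right descent `s` has `θ(s)` as a left descent, and `w·ŝ` is
shorter than `w`: it is either `ws`, or `θ(s)ws`, which is shorter because an element `w` with
left descent `s'` and right descent `s` satisfies `s'ws = w` or `ℓ(s'ws) < ℓ(w)`. As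
`(w·ŝ)·ŝ = w` and every `ŝ` preserves `𝕀(θ)`, induction on `ℓ(w)` gives the theorem.

The length dichotomy is a form of the exchange condition. It comes from the representation of `W`
on `W × ℤ/2` in which `s` acts by `(t, ε) ↦ (sts, ε + [t = s])`: it shows that the parity of the
number of occurrences of `t` in the left inversion sequence of a word only depends on the element
the word represents.
-/

theorem MulAut.conj_apply_eq_self_iff {G : Type*} [Group G] (g t : G) :
    MulAut.conj g t = g ↔ t = g := by
  rw [MulAut.conj_apply, mul_inv_eq_iff_eq_mul, mul_right_inj]

namespace CoxeterSystem

variable (cs : CoxeterSystem M W)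

theorem prod_map_alternatingWord_two_mul {G : Type*} [Monoid G] (f : B → G) (i i' : B)
    (m : ℕ) : ((alternatingWord i i' (2 * m)).map f).prod = (f i * f i') ^ m := by
  induction m with
  | zero => simp [alternatingWord]
  | succ m ih =>
    rw [show 2 * (m + 1) = 2 * m + 1 + 1 by ring, alternatingWord_succ', alternatingWord_succ',
      if_neg (by simp [parity_simps]), if_pos (by simp), map_cons, map_cons, prod_cons, prod_cons,
      ih, pow_succ', mul_assoc]

noncomputable def reflectionPerm (i : B) : Equiv.Perm (W × ZMod 2) :=
  Function.Involutive.toPerm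
    (fun x => (MulAut.conj (cs.simple i) x.1, x.2 + if x.1 = cs.simple i then 1 else 0))
    (by
      rintro ⟨t, ε⟩
      ext
      · simp [cs.inv_simple, mul_assoc, cs.simple_mul_simple_cancel_left]
      · simp only [MulAut.conj_apply_eq_self_iff]
        split_ifs <;> simp [add_assoc, CharTwo.add_self_eq_zero])

@[simp]
theorem reflectionPerm_apply (i : B) (t : W) (ε : ZMod 2) :
    cs.reflectionPerm i (t, ε) =
      (MulAut.conj (cs.simple i) t, ε + if t = cs.simple i then 1 else 0) :=
  rfl

theorem prod_map_reflectionPerm_apply (ω : List B) (t : W) (ε : ZMod 2) :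
    (ω.map cs.reflectionPerm).prod (t, ε) =
      (MulAut.conj (cs.wordProd ω) t,
        ε + (cs.leftInvSeq ω).count (MulAut.conj (cs.wordProd ω) t)) := by
  induction ω generalizing ε with
  | nil => simp
  | cons j ω ih =>
    rw [map_cons, prod_cons, Equiv.Perm.mul_apply, ih, wordProd_cons, leftInvSeq, count_cons,
      map_mul, MulAut.mul_apply, reflectionPerm_apply,
      count_map_of_injective _ _ (MulAut.conj _).injective]
    simp only [beq_iff_eq, eq_comm (a := cs.simple j), MulAut.conj_apply_eq_self_iff]
    push_cast
    rw [add_assoc]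

theorem leftInvSeq_alternatingWord_two_mul (i i' : B) (p : ℕ) :
    cs.leftInvSeq (alternatingWord i i' (2 * p)) =
      (range (2 * p)).map fun k => cs.simple i * (cs.simple i' * cs.simple i) ^ k := by
  refine List.ext_getElem (by simp) fun k hk _ => ?_
  rw [getElem_leftInvSeq_alternatingWord _ _ _ _ _ (by simpa using hk), getElem_map, getElem_range,
    prod_alternatingWord_eq_mul_pow, if_neg (by simp [parity_simps]),
    show (2 * k + 1) / 2 = k by omega]

theorem even_count_leftInvSeq_alternatingWord (i i' : B) (t : W) :
    Even ((cs.leftInvSeq (alternatingWord i i' (2 * M i i'))).count t) := by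
  have hperiodic : ((fun k => cs.simple i * (cs.simple i' * cs.simple i) ^ k) ∘ (M i i' + ·)) =
      fun k => cs.simple i * (cs.simple i' * cs.simple i) ^ k := by
    funext k
    simp [pow_add]
  rw [leftInvSeq_alternatingWord_two_mul, two_mul, range_add, map_append, map_map, hperiodic,
    count_append]
  exact Even.add_self _

theorem isLiftable_reflectionPerm : M.IsLiftable cs.reflectionPerm := by
  intro i i'
  rw [← prod_map_alternatingWord_two_mul]
  ext ⟨t, ε⟩ : 1
  rw [prod_map_reflectionPerm_apply, prod_alternatingWord_eq_mul_pow, if_pos (by simp),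
    Nat.mul_div_cancel_left _ two_pos, simple_mul_simple_pow, one_mul, map_one,
    MulAut.one_apply, (even_count_leftInvSeq_alternatingWord cs i i' t).natCast_zmod_two, add_zero,
    Equiv.Perm.one_apply]

theorem lift_reflectionPerm_wordProd (ω : List B) :
    cs.lift ⟨cs.reflectionPerm, cs.isLiftable_reflectionPerm⟩ (cs.wordProd ω) =
      (ω.map cs.reflectionPerm).prod := by
  simp [wordProd, map_list_prod, Function.comp_def]

theorem count_leftInvSeq_congr {ω ω' : List B} (h : cs.wordProd ω = cs.wordProd ω') (t : W) :
    ((cs.leftInvSeq ω).count t : ZMod 2) = (cs.leftInvSeq ω').count t := by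
  have := congrArg (fun g => (cs.lift ⟨_, cs.isLiftable_reflectionPerm⟩ g
    ((MulAut.conj (cs.wordProd ω)).symm t, 0)).2) h
  simp only [lift_reflectionPerm_wordProd, prod_map_reflectionPerm_apply] at this
  simpa [h, mul_assoc] using this

theorem simple_mem_leftInvSeq_of_isLeftDescent {ω : List B} {j : B}
    (h : cs.IsLeftDescent (cs.wordProd ω) j) : cs.simple j ∈ cs.leftInvSeq ω := by
  obtain ⟨α, hα, hαω⟩ := cs.exists_isReduced (cs.simple j * cs.wordProd ω)
  have hjα : cs.wordProd (j :: α) = cs.wordProd ω := by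
    rw [wordProd_cons, ← hαω, simple_mul_simple_cancel_left]
  have hnot : cs.simple j ∉ cs.leftInvSeq α := fun hmem => by
    have := (cs.isLeftInversion_of_mem_leftInvSeq hα hmem).2
    rw [← hαω, simple_mul_simple_cancel_left] at this
    exact lt_asymm this h
  have hodd : ((cs.leftInvSeq (j :: α)).count (cs.simple j) : ZMod 2) = 1 := by
    have hzero : ((cs.leftInvSeq α).map (MulAut.conj (cs.simple j))).count (cs.simple j) = 0 := by
      rw [count_eq_zero, mem_map]
      rintro ⟨u, hu, hconj⟩
      exact hnot ((MulAut.conj_apply_eq_self_iff _ _).mp hconj ▸ hu)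
    simp [leftInvSeq, hzero]
  rw [← count_pos_iff, Nat.pos_iff_ne_zero]
  intro h0
  simp [count_leftInvSeq_congr cs hjα, h0] at hodd

theorem length_simple_mul_mul_simple_lt {w : W} {i j : B} (hi : cs.IsRightDescent w i)
    (hj : cs.IsLeftDescent w j) (hne : cs.simple j * w * cs.simple i ≠ w) :
    cs.length (cs.simple j * w * cs.simple i) < cs.length w := by
  obtain ⟨α, hα, hαw⟩ := cs.exists_isReduced (w * cs.simple i)
  have hw : cs.wordProd (α.concat i) = w := by
    rw [wordProd_concat, ← hαw, simple_mul_simple_cancel_right]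
  have hmem := cs.simple_mem_leftInvSeq_of_isLeftDescent (hw ▸ hj)
  rw [leftInvSeq_concat, concat_eq_append, mem_append, mem_singleton] at hmem
  rcases hmem with hmem | hreflect
  · obtain ⟨k, hk, hkj⟩ := getElem_of_mem hmem
    have hdel : cs.simple j * w * cs.simple i = cs.wordProd (α.eraseIdx k) := by
      rw [mul_assoc, hαw, ← getD_leftInvSeq_mul_wordProd, getD_eq_getElem _ _ hk, hkj]
    calc cs.length (cs.simple j * w * cs.simple i) ≤ (α.eraseIdx k).length :=
          hdel ▸ cs.length_wordProd_le _
      _ < α.length := by rw [length_leftInvSeq] at hk; rw [length_eraseIdx_of_lt hk]; omega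
      _ = cs.length (w * cs.simple i) := by rw [hαw, hα]
      _ < cs.length w := hi
  · refine absurd ?_ hne
    rw [hreflect, ← hαw]
    simp [mul_assoc, cs.inv_simple]

theorem length_apply_le_of_apply_simple (f : W →* W) (σ : B → B)
    (hσ : ∀ i, f (cs.simple i) = cs.simple (σ i)) (w : W) : cs.length (f w) ≤ cs.length w := by
  obtain ⟨ω, hω, rfl⟩ := cs.exists_isReduced w
  have hf : f (cs.wordProd ω) = cs.wordProd (ω.map σ) := by
    simp [wordProd, map_list_prod, hσ, Function.comp_def]
  rw [hf, hω]
  simpa using cs.length_wordProd_le (ω.map σ)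

end CoxeterSystem

section TwistedInvolutions

variable (cs : CoxeterSystem M W) (θ : W ≃* W)

theorem twMul_twMul (w : W) (i : B) : twMul cs θ (twMul cs θ w i) i = w := by
  have hθs : θ (cs.simple i) * θ (cs.simple i) = 1 := by
    rw [← map_mul, cs.simple_mul_simple_self, map_one]
  by_cases h : θ (cs.simple i) * w * cs.simple i = w
  · have h' : θ (cs.simple i) * (w * cs.simple i) * cs.simple i = w * cs.simple i := by
      rw [← mul_assoc, h]
    rw [show twMul cs θ w i = w * cs.simple i from if_pos h, twMul, if_pos h',
      cs.simple_mul_simple_cancel_right]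
  · have h' : θ (cs.simple i) * (θ (cs.simple i) * w * cs.simple i) * cs.simple i = w := by
      rw [← mul_assoc, ← mul_assoc, hθs, one_mul, cs.simple_mul_simple_cancel_right]
    rw [show twMul cs θ w i = θ (cs.simple i) * w * cs.simple i from if_neg h, twMul, h',
      if_neg (fun h'' => h h''.symm)]

theorem twMul_mem_twistedInvolutions (hθ : ∀ w, θ (θ w) = w) {w : W}
    (hw : w ∈ TwistedInvolutions θ) (i : B) : twMul cs θ w i ∈ TwistedInvolutions θ := by
  simp only [TwistedInvolutions, Set.mem_ofPred_eq] at hw ⊢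
  unfold twMul
  split_ifs with h
  · have hθs : θ (cs.simple i) = w * cs.simple i * w⁻¹ := by
      rw [eq_mul_inv_iff_mul_eq]
      simpa [mul_assoc, cs.simple_mul_simple_self] using congrArg (· * cs.simple i) h
    rw [map_mul, hw, hθs, mul_inv_rev, cs.inv_simple]
    group
  · rw [map_mul, map_mul, hθ, hw]
    simp [mul_assoc, cs.inv_simple, ← map_inv]

theorem twWord_mem_twistedInvolutions (hθ : ∀ w, θ (θ w) = w) {w : W}
    (hw : w ∈ TwistedInvolutions θ) (ω : List B) : twWord cs θ w ω ∈ TwistedInvolutions θ := by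
  induction ω generalizing w with
  | nil => exact hw
  | cons i ω ih => exact ih (twMul_mem_twistedInvolutions cs θ hθ hw i)

theorem isLeftDescent_of_isRightDescent (σ : B → B) (hσ : ∀ i, θ (cs.simple i) = cs.simple (σ i))
    {w : W} (hw : w ∈ TwistedInvolutions θ) {i : B}
    (hi : cs.IsRightDescent w i) : cs.IsLeftDescent w (σ i) := by
  have h : cs.simple (σ i) * w = θ (w * cs.simple i)⁻¹ := by
    rw [← hσ, map_inv, map_mul, hw, mul_inv_rev, inv_inv, ← map_inv, cs.inv_simple]
  calc cs.length (cs.simple (σ i) * w) ≤ cs.length (w * cs.simple i)⁻¹ :=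
        h ▸ cs.length_apply_le_of_apply_simple θ.toMonoidHom σ hσ _
    _ = cs.length (w * cs.simple i) := cs.length_inv _
    _ < cs.length w := hi

theorem length_twMul_lt (σ : B → B) (hσ : ∀ i, θ (cs.simple i) = cs.simple (σ i))
    {w : W} (hw : w ∈ TwistedInvolutions θ) {i : B}
    (hi : cs.IsRightDescent w i) : cs.length (twMul cs θ w i) < cs.length w := by
  unfold twMul
  split_ifs with h
  · exact hi
  · rw [hσ] at h ⊢
    exact cs.length_simple_mul_mul_simple_lt hi (isLeftDescent_of_isRightDescent cs θ σ hσ hw hi) h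

theorem exists_twWord_one_eq (σ : B → B) (hσ : ∀ i, θ (cs.simple i) = cs.simple (σ i))
    (hθ : ∀ w, θ (θ w) = w) {w : W} (hw : w ∈ TwistedInvolutions θ) :
    ∃ ω, twWord cs θ 1 ω = w := by
  induction h : cs.length w using Nat.strong_induction_on generalizing w with
  | _ n ih =>
  rcases eq_or_ne w 1 with rfl | hw1
  · exact ⟨[], rfl⟩
  obtain ⟨i, hi⟩ := cs.exists_rightDescent_of_ne_one hw1
  obtain ⟨ω, hω⟩ := ih _ (h ▸ length_twMul_lt cs θ σ hσ hw hi)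
    (twMul_mem_twistedInvolutions cs θ hθ hw i) rfl
  refine ⟨ω ++ [i], ?_⟩
  simp only [twWord, foldl_append, foldl_cons, foldl_nil] at hω ⊢
  rw [hω, twMul_twMul]

end TwistedInvolutions

/-- the set of twisted involutions equals the orbit of the identity under the
right action of the free monoid on `{ŝ : s ∈ S}`. -/
theorem twistedInvolutions_eq_orbit (cs : CoxeterSystem M W) (θ : W ≃* W)
    (hθ : ∀ w : W, θ (θ w) = w) (σ : B → B)
    (hσ : ∀ i : B, θ (cs.simple i) = cs.simple (σ i)) :
    TwistedInvolutions θ = {w : W | ∃ ω : List B, twWord cs θ 1 ω = w} := by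
  ext w
  constructor
  · exact exists_twWord_one_eq cs θ σ hσ hθ
  · rintro ⟨ω, rfl⟩
    exact twWord_mem_twistedInvolutions cs θ hθ (by simp [TwistedInvolutions]) ω
end

section
/- Let W be the symmetric group S₄ with simple generators sᵢ = (i,i+1) and w the longest element. For θ = id, the graph G(w,θ) has edges {s₁,s₂} and {s₂,s₃} but not {s₁,s₃} (hence it is connected); for the nontrivial diagram automorphism θ (θ(sᵢ) = s₄₋ᵢ), G(w,θ) has the single edge {s₁,s₃} (hence it is disconnected). -/
/-!
The longest element `w₀ = Fin.revPerm` of `S₄` has `Ŝ`-rank `4` for both involutions `θ`: explicit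
expressions of length `4` exist, and an exhaustive search shows that no shorter word in the
symbols `ŝᵢ` reaches `w₀`. An edge `{sᵢ, sᵢ'}` of `G(w₀,θ)` is then witnessed by a length-`4`
expression ending in the alternating word of length `m(sᵢ,sᵢ')`, and a non-edge by a search
through all words of the complementary length followed by that alternating word.
-/

attribute [local instance] Classical.propDecidable
open CoxeterSystem List

variable {B : Type*} {M : CoxeterMatrix B} {W : Type*} [Group W]

theorem List.mem_sections_replicate_length {α : Type*} {l : List α} (hl : ∀ a, a ∈ l) :
    ∀ ω : List α, ω ∈ (replicate ω.length l).sections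
  | [] => by simp
  | a :: ω => mem_sections.2 (.cons (hl a) (mem_sections.1 (mem_sections_replicate_length hl ω)))

section TwistedAction

variable [DecidableEq W]

/-- `twMul` for `cs.simple = s` and `θ ∘ cs.simple = cs.simple ∘ σ`, made computable by a decidable
equality on `W`. -/
def twStep (s : B → W) (σ : B → B) (w : W) (i : B) : W :=
  if s (σ i) * w * s i = w then w * s i else s (σ i) * w * s i

variable (cs : CoxeterSystem M W) (θ : W ≃* W) {s : B → W} {σ : B → B}

theorem twWord_eq_foldl_twStep (hs : ∀ i, cs.simple i = s i)
    (hθ : ∀ i, θ (cs.simple i) = cs.simple (σ i)) (w : W) (ω : List B) :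
    twWord cs θ w ω = ω.foldl (twStep s σ) w := by
  have hstep : twMul cs θ = twStep s σ := by
    funext w i
    simp only [twMul, twStep, hθ]
    simp only [hs]
  rw [twWord, hstep]

theorem twRank_eq_of_foldl_twStep {gens : List B} (hgens : ∀ i, i ∈ gens)
    (hs : ∀ i, cs.simple i = s i) (hθ : ∀ i, θ (cs.simple i) = cs.simple (σ i)) {w : W}
    (ω : List B) (hω : ω.foldl (twStep s σ) 1 = w)
    (hshort : ∀ n < ω.length, ∀ ω' ∈ (replicate n gens).sections, ω'.foldl (twStep s σ) 1 ≠ w) :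
    twRank cs θ w = ω.length := by
  refine IsLeast.csInf_eq ⟨⟨ω, rfl, by rwa [twWord_eq_foldl_twStep cs θ hs hθ]⟩, ?_⟩
  rintro n ⟨ω', rfl, hω'⟩
  by_contra! hlt
  rw [twWord_eq_foldl_twStep cs θ hs hθ] at hω'
  exact hshort _ hlt ω' (mem_sections_replicate_length hgens ω') hω'

theorem isMaximalS_of_foldl_twStep (hs : ∀ i, cs.simple i = s i)
    (hθ : ∀ i, θ (cs.simple i) = cs.simple (σ i)) {w : W} {i i' : B} (ω : List B)
    (hω : (ω ++ alternatingWord i' i (M i i')).foldl (twStep s σ) 1 = w)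
    (hrank : twRank cs θ w = (ω ++ alternatingWord i' i (M i i')).length) :
    IsMaximalS cs θ w i i' :=
  ⟨ω, by rwa [twWord_eq_foldl_twStep cs θ hs hθ], hrank.symm⟩

theorem not_isMaximalS_of_foldl_twStep {gens : List B} (hgens : ∀ i, i ∈ gens)
    (hs : ∀ i, cs.simple i = s i) (hθ : ∀ i, θ (cs.simple i) = cs.simple (σ i)) {w : W}
    {i i' : B} (hnone : ∀ ω ∈ (replicate (twRank cs θ w - M i i') gens).sections,
      (ω ++ alternatingWord i' i (M i i')).foldl (twStep s σ) 1 ≠ w) :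
    ¬ IsMaximalS cs θ w i i' := by
  rintro ⟨ω, hω, hrank⟩
  rw [twWord_eq_foldl_twStep cs θ hs hθ] at hω
  have hlen : ω.length = twRank cs θ w - M i i' := by
    rw [← hrank, length_append, length_alternatingWord, Nat.add_sub_cancel]
  exact hnone ω (hlen ▸ mem_sections_replicate_length hgens ω) hω

end TwistedAction

/-- in the symmetric group `S₄` with simple generators `sᵢ = (i, i+1)` and `w`
the longest element, for `θ = id` the graph `G(w,θ)` has exactly the edges `{s₁,s₂}` and
`{s₂,s₃}`, while for the nontrivial diagram automorphism `θ` it has the single edge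
`{s₁,s₃}`. -/
theorem descentGraph_S4 (cs : CoxeterSystem (CoxeterMatrix.Aₙ 3) (Equiv.Perm (Fin 4)))
    (hcs : ∀ i : Fin 3, cs.simple i = Equiv.swap i.castSucc i.succ) :
    (IsMaximalS cs (MulEquiv.refl _) Fin.revPerm 0 1 ∧
     IsMaximalS cs (MulEquiv.refl _) Fin.revPerm 1 2 ∧
     ¬ IsMaximalS cs (MulEquiv.refl _) Fin.revPerm 0 2) ∧
    (∀ θ : Equiv.Perm (Fin 4) ≃* Equiv.Perm (Fin 4),
      (∀ i : Fin 3, θ (cs.simple i) = cs.simple (2 - i)) →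
      IsMaximalS cs θ Fin.revPerm 0 2 ∧
      ¬ IsMaximalS cs θ Fin.revPerm 0 1 ∧
      ¬ IsMaximalS cs θ Fin.revPerm 1 2) := by
  have hgens : ∀ i : Fin 3, i ∈ finRange 3 := mem_finRange
  have hid : ∀ i, MulEquiv.refl _ (cs.simple i) = cs.simple (id i) := fun _ => rfl
  have hrank_id : twRank cs (MulEquiv.refl _) Fin.revPerm = 4 :=
    twRank_eq_of_foldl_twStep cs _ hgens hcs hid [0, 1, 2, 1] (by decide) (by decide)
  refine ⟨⟨isMaximalS_of_foldl_twStep cs _ hcs hid [2] (by decide) (by rw [hrank_id]; rfl),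
    isMaximalS_of_foldl_twStep cs _ hcs hid [0] (by decide) (by rw [hrank_id]; rfl),
    not_isMaximalS_of_foldl_twStep cs _ hgens hcs hid (by rw [hrank_id]; decide)⟩, fun θ hθ => ?_⟩
  have hrank : twRank cs θ Fin.revPerm = 4 :=
    twRank_eq_of_foldl_twStep cs θ hgens hcs hθ [0, 1, 2, 0] (by decide) (by decide)
  exact ⟨isMaximalS_of_foldl_twStep cs θ hcs hθ [0, 1] (by decide) (by rw [hrank]; rfl),
    not_isMaximalS_of_foldl_twStep cs θ hgens hcs hθ (by rw [hrank]; decide),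
    not_isMaximalS_of_foldl_twStep cs θ hgens hcs hθ (by rw [hrank]; decide)⟩
end
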